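/- A formula φ in negation normal form is satisfiable if and only if there exists a Hintikka structure for φ. -/

import Mathlib

mutual
inductive Fml : Type where
  | var : ℕ → Fml
  | neg : Fml → Fml
  | and : Fml → Fml → Fml
  | or : Fml → Fml → Fml
  | dia : Prog → Fml → Fml
  | box : Prog → Fml → Fml
  deriving DecidableEq
inductive Prog : Type where
  | atom : ℕ → Prog
  | conv : ℕ → Prog
  | seq : Prog → Prog → Prog
  | choice : Prog → Prog → Prog
  | star : Prog → Prog
  | test : Fml → Prog
  deriving DecidableEq
end

structure Model (W : Type) where
  R : ℕ → W → W → Prop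
  V : ℕ → W → Prop

mutual
def Sat {W : Type} (M : Model W) : W → Fml → Prop
  | w, .var p => M.V p w
  | w, .neg φ => ¬ Sat M w φ
  | w, .and φ ψ => Sat M w φ ∧ Sat M w ψ
  | w, .or φ ψ => Sat M w φ ∨ Sat M w ψ
  | w, .dia γ φ => ∃ v, PRel M γ w v ∧ Sat M v φ
  | w, .box γ φ => ∀ v, PRel M γ w v → Sat M v φ
def PRel {W : Type} (M : Model W) : Prog → W → W → Prop
  | .atom a, w, v => M.R a w v
  | .conv a, w, v => M.R a v w
  | .seq γ δ, w, v => ∃ u, PRel M γ w u ∧ PRel M δ u v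
  | .choice γ δ, w, v => PRel M γ w v ∨ PRel M δ w v
  | .star γ, w, v => Relation.ReflTransGen (fun a b => PRel M γ a b) w v
  | .test φ, w, v => w = v ∧ Sat M w φ
end
mutual
def IsNNF : Fml → Prop
  | .var _ => True
  | .neg (.var _) => True
  | .neg _ => False
  | .and φ ψ => IsNNF φ ∧ IsNNF ψ
  | .or φ ψ => IsNNF φ ∧ IsNNF ψ
  | .dia γ φ => IsNNFP γ ∧ IsNNF φ
  | .box γ φ => IsNNFP γ ∧ IsNNF φ
def IsNNFP : Prog → Prop
  | .atom _ => True
  | .conv _ => True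
  | .seq γ δ => IsNNFP γ ∧ IsNNFP δ
  | .choice γ δ => IsNNFP γ ∧ IsNNFP δ
  | .star γ => IsNNFP γ
  | .test φ => IsNNF φ
end

mutual
/-- `nnf φ` is the negation normal form of `φ`. -/
def nnf : Fml → Fml
  | .var p => .var p
  | .neg φ => nnfNeg φ
  | .and φ ψ => .and (nnf φ) (nnf ψ)
  | .or φ ψ => .or (nnf φ) (nnf ψ)
  | .dia γ φ => .dia γ (nnf φ)
  | .box γ φ => .box γ (nnf φ)
/-- `nnfNeg φ = nnf (¬ φ)`, written `∼φ`. -/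
def nnfNeg : Fml → Fml
  | .var p => .neg (.var p)
  | .neg φ => nnf φ
  | .and φ ψ => .or (nnfNeg φ) (nnfNeg ψ)
  | .or φ ψ => .and (nnfNeg φ) (nnfNeg ψ)
  | .dia γ φ => .box γ (nnfNeg φ)
  | .box γ φ => .dia γ (nnfNeg φ)
end

/-- Literal programs: atomic programs or converses of atomic programs. -/
inductive Lit : Type where
  | atom : ℕ → Lit
  | conv : ℕ → Lit
  deriving DecidableEq

def Lit.toProg : Lit → Prog
  | .atom a => .atom a
  | .conv a => .conv a

/-- The converse `l⁻` of a literal program. -/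
def Lit.inv : Lit → Lit
  | .atom a => .conv a
  | .conv a => .atom a

/-- The reduction relation `⤳` on ⟨·⟩-formulae. -/
inductive Red : Fml → Fml → Prop where
  | seq (γ δ χ) : Red (.dia (.seq γ δ) χ) (.dia γ (.dia δ χ))
  | choiceL (γ δ χ) : Red (.dia (.choice γ δ) χ) (.dia γ χ)
  | choiceR (γ δ χ) : Red (.dia (.choice γ δ) χ) (.dia δ χ)
  | star1 (γ χ) : Red (.dia (.star γ) χ) χ
  | star2 (γ χ) : Red (.dia (.star γ) χ) (.dia γ (.dia (.star γ) χ))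
  | test (ϕ χ) : Red (.dia (.test ϕ) χ) χ

/-- `InPre ψ φ` means `φ ∈ pre(ψ)`, i.e. `φ = ⟨γ₁⟩…⟨γ_k⟩ψ`. -/
inductive InPre (ψ : Fml) : Fml → Prop where
  | base : InPre ψ ψ
  | step (γ φ) : InPre ψ φ → InPre ψ (.dia γ φ)

/-- `φ` is an eventuality: `φ = ⟨γ₁⟩…⟨γ_k⟩⟨γ*⟩ψ`. -/
def IsEv (φ : Fml) : Prop := ∃ γ ψ, InPre (.dia (.star γ) ψ) φ

mutual
/-- Size of formulas. -/
def fsize : Fml → ℕ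
  | .var _ => 1
  | .neg (.var _) => 1
  | .neg φ => 1 + fsize φ
  | .and φ ψ => 1 + fsize φ + fsize ψ
  | .or φ ψ => 1 + fsize φ + fsize ψ
  | .dia γ φ => psize γ + fsize φ
  | .box γ φ => psize γ + fsize φ
/-- Size of programs. -/
def psize : Prog → ℕ
  | .atom _ => 1
  | .conv _ => 1
  | .seq γ δ => 1 + psize γ + psize δ
  | .choice γ δ => 1 + psize γ + psize δ
  | .star γ => 1 + psize γ
  | .test φ => 1 + fsize φ
end
/-- One decomposition step generating the closure `cl(φ)`. -/
inductive ClStep : Fml → Fml → Prop where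
  | diaLit (l : Lit) (ψ) : ClStep (.dia l.toProg ψ) ψ
  | boxLit (l : Lit) (ψ) : ClStep (.box l.toProg ψ) ψ
  | andL (φ ψ) : ClStep (.and φ ψ) φ
  | andR (φ ψ) : ClStep (.and φ ψ) ψ
  | orL (φ ψ) : ClStep (.or φ ψ) φ
  | orR (φ ψ) : ClStep (.or φ ψ) ψ
  | boxChoiceL (γ δ φ) : ClStep (.box (.choice γ δ) φ) (.box γ φ)
  | boxChoiceR (γ δ φ) : ClStep (.box (.choice γ δ) φ) (.box δ φ)
  | boxStar1 (γ φ) : ClStep (.box (.star γ) φ) φ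
  | boxStar2 (γ φ) : ClStep (.box (.star γ) φ) (.box γ (.box (.star γ) φ))
  | diaTest1 (ψ φ) : ClStep (.dia (.test ψ) φ) φ
  | diaTest2 (ψ φ) : ClStep (.dia (.test ψ) φ) ψ
  | diaSeq (γ δ φ) : ClStep (.dia (.seq γ δ) φ) (.dia γ (.dia δ φ))
  | boxSeq (γ δ φ) : ClStep (.box (.seq γ δ) φ) (.box γ (.box δ φ))
  | diaChoiceL (γ δ φ) : ClStep (.dia (.choice γ δ) φ) (.dia γ φ)
  | diaChoiceR (γ δ φ) : ClStep (.dia (.choice γ δ) φ) (.dia δ φ)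
  | diaStar1 (γ φ) : ClStep (.dia (.star γ) φ) φ
  | diaStar2 (γ φ) : ClStep (.dia (.star γ) φ) (.dia γ (.dia (.star γ) φ))
  | boxTest1 (ψ φ) : ClStep (.box (.test ψ) φ) φ
  | boxTest2 (ψ φ) : ClStep (.box (.test ψ) φ) (nnfNeg ψ)

/-- The closure `cl(φ)`: the least set containing `φ` and closed under `ClStep`. -/
def Cl (φ : Fml) : Set Fml := {ψ | Relation.ReflTransGen ClStep φ ψ}

/-- A single step of a (model) chain: a literal-program diamond is instantiated,
otherwise a `⤳`-reduction happens at the same world. -/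
def ChainStep {W : Type} (M : Model W) : (W × Fml) → (W × Fml) → Prop
  | (w, .dia (.atom a) χ), (w', χ') => χ' = χ ∧ M.R a w w'
  | (w, .dia (.conv a) χ), (w', χ') => χ' = χ ∧ M.R a w' w
  | (w, χ), (w', χ') => Red χ χ' ∧ w' = w

/-- `σ` is a model chain for `(M, w, φ, ψ)`. -/
def ModelChain {W : Type} (M : Model W) (w : W) (φ ψ : Fml) (σ : List (W × Fml)) : Prop :=
  ∃ h : σ ≠ [], σ.head h = (w, φ) ∧ (σ.getLast h).2 = ψ ∧
    (∀ p ∈ σ, Sat M p.1 p.2) ∧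
    ∀ i, (h1 : i + 1 < σ.length) →
      ChainStep M (σ.get ⟨i, by omega⟩) (σ.get ⟨i + 1, h1⟩)

open Classical in
/-- `ex φ`: the largest non-eventuality `ψ` with `φ ∈ pre(ψ)`. -/
noncomputable def ex : Fml → Fml
  | .dia γ ψ => if IsEv (.dia γ ψ) then ex ψ else .dia γ ψ
  | φ => φ

mutual
/-- `SubF χ φ`: `χ` is a subformula of the formula `φ`. -/
inductive SubF : Fml → Fml → Prop where
  | refl (φ) : SubF φ φ
  | neg {χ φ} : SubF χ φ → SubF χ (.neg φ)
  | andL {χ φ ψ} : SubF χ φ → SubF χ (.and φ ψ)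
  | andR {χ φ ψ} : SubF χ ψ → SubF χ (.and φ ψ)
  | orL {χ φ ψ} : SubF χ φ → SubF χ (.or φ ψ)
  | orR {χ φ ψ} : SubF χ ψ → SubF χ (.or φ ψ)
  | diaF {χ γ φ} : SubF χ φ → SubF χ (.dia γ φ)
  | diaP {χ γ φ} : SubP χ γ → SubF χ (.dia γ φ)
  | boxF {χ γ φ} : SubF χ φ → SubF χ (.box γ φ)
  | boxP {χ γ φ} : SubP χ γ → SubF χ (.box γ φ)
/-- `SubP χ γ`: `χ` is a subformula of the program `γ`. -/
inductive SubP : Fml → Prog → Prop where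
  | seqL {χ γ δ} : SubP χ γ → SubP χ (.seq γ δ)
  | seqR {χ γ δ} : SubP χ δ → SubP χ (.seq γ δ)
  | choiceL {χ γ δ} : SubP χ γ → SubP χ (.choice γ δ)
  | choiceR {χ γ δ} : SubP χ δ → SubP χ (.choice γ δ)
  | star {χ γ} : SubP χ γ → SubP χ (.star γ)
  | test {χ φ} : SubF χ φ → SubP χ (.test φ)
end
/-- `ann` is an annotation for `Γ`: it maps some eventualities `φ ∈ Γ`
to a formula `ann φ ∈ Γ` with `φ ⤳ ann φ`. -/
def IsAnnotation (Γ : Set Fml) (ann : Fml → Option Fml) : Prop :=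
  ∀ φ φ', ann φ = some φ' → φ ∈ Γ ∧ IsEv φ ∧ φ' ∈ Γ ∧ Red φ φ'

/-- `ann` is full on `Γ`: it is defined on all eventualities of `Γ`. -/
def FullAnn (Γ : Set Fml) (ann : Fml → Option Fml) : Prop :=
  ∀ φ ∈ Γ, IsEv φ → (ann φ).isSome

/-- `ann` is non-cyclic: there is no cycle `φ₀, …, φ_n` with `ann φ_i = φ_{i+1 mod n+1}`. -/
def NonCyclic (ann : Fml → Option Fml) : Prop :=
  ¬ ∃ (n : ℕ) (f : ℕ → Fml), (∀ i < n, ann (f i) = some (f (i + 1))) ∧ ann (f n) = some (f 0)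

/-- One step of iterating an annotation (identity where undefined). -/
def annStep (ann : Fml → Option Fml) (φ : Fml) : Fml := (ann φ).getD φ

/-- The pure-formula version of a chain step:
if `χ = ⟨l⟩χ₀` for a literal program `l` then `χ' = χ₀`, else `χ ⤳ χ'`. -/
def FStep : Fml → Fml → Prop
  | .dia (.atom _) χ, χ' => χ' = χ
  | .dia (.conv _) χ, χ' => χ' = χ
  | χ, χ' => Red χ χ'

mutual
/-- The atomic program `d` occurs in a formula. -/
def OccursF (d : ℕ) : Fml → Prop
  | .var _ => False
  | .neg φ => OccursF d φ
  | .and φ ψ => OccursF d φ ∨ OccursF d ψ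
  | .or φ ψ => OccursF d φ ∨ OccursF d ψ
  | .dia γ φ => OccursP d γ ∨ OccursF d φ
  | .box γ φ => OccursP d γ ∨ OccursF d φ
/-- The atomic program `d` occurs in a program (as `d` or `d⁻`). -/
def OccursP (d : ℕ) : Prog → Prop
  | .atom a => a = d
  | .conv a => a = d
  | .seq γ δ => OccursP d γ ∨ OccursP d δ
  | .choice γ δ => OccursP d γ ∨ OccursP d δ
  | .star γ => OccursP d γ
  | .test φ => OccursF d φ
end

/-- `(M, w, chn)` annotated-satisfies `(Γ, ann)`. -/
def AnnSat {W : Type} (M : Model W) (w : W)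
    (chn : Fml → Option (List (W × Fml))) (Γ : Set Fml) (ann : Fml → Option Fml) : Prop :=
  (∀ ψ ∈ Γ, Sat M w ψ) ∧
  (∀ ψ ∈ Γ, IsEv ψ → (chn ψ).isSome) ∧
  (∀ ψ σ, IsEv ψ → chn ψ = some σ →
    ModelChain M w ψ (ex ψ) σ ∧
    (∀ i, (h : i < σ.length) → ∀ χ, σ.get ⟨i, h⟩ = (w, χ) → IsEv χ → chn χ = some (σ.drop i)) ∧
    (∀ ψ', ann ψ = some ψ' → ∃ h : 1 < σ.length, σ.get ⟨1, h⟩ = (w, ψ')))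

/-- A structure `(W, R, L)`: a transition frame with a labelling function. -/
structure Str (W : Type) where
  R : ℕ → W → W → Prop
  L : W → Set Fml

/-- The relation interpreting a literal program in a structure. -/
def Str.Rl {W : Type} (H : Str W) : Lit → W → W → Prop
  | .atom a => H.R a
  | .conv a => fun w v => H.R a v w

/-- A chain step in a structure. -/
def SChainStep {W : Type} (H : Str W) : (W × Fml) → (W × Fml) → Prop
  | (w, .dia (.atom a) χ), (w', χ') => χ' = χ ∧ H.R a w w'
  | (w, .dia (.conv a) χ), (w', χ') => χ' = χ ∧ H.R a w' w
  | (w, χ), (w', χ') => Red χ χ' ∧ w' = w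

/-- `σ` is a fulfilling chain for `(H, w, φ, ψ)`. -/
def FulfillChain {W : Type} (H : Str W) (w : W) (φ ψ : Fml) (σ : List (W × Fml)) : Prop :=
  ∃ h : σ ≠ [], σ.head h = (w, φ) ∧ (σ.getLast h).2 = ψ ∧
    (∀ p ∈ σ, p.2 ∈ H.L p.1) ∧
    ∀ i, (h1 : i + 1 < σ.length) →
      SChainStep H (σ.get ⟨i, by omega⟩) (σ.get ⟨i + 1, h1⟩)

/-- The Hintikka conditions H1–H6. -/
def Hintikka {W : Type} (H : Str W) : Prop := ∀ w : W,
  -- H1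
  (∀ p, Fml.neg (.var p) ∈ H.L w → Fml.var p ∉ H.L w) ∧
  -- H2 (α-formulae)
  (∀ φ ψ, Fml.and φ ψ ∈ H.L w → φ ∈ H.L w ∧ ψ ∈ H.L w) ∧
  (∀ γ δ φ, Fml.box (.choice γ δ) φ ∈ H.L w → Fml.box γ φ ∈ H.L w ∧ Fml.box δ φ ∈ H.L w) ∧
  (∀ γ φ, Fml.box (.star γ) φ ∈ H.L w →
    φ ∈ H.L w ∧ Fml.box γ (.box (.star γ) φ) ∈ H.L w) ∧
  (∀ ψ φ, Fml.dia (.test ψ) φ ∈ H.L w → φ ∈ H.L w ∧ ψ ∈ H.L w) ∧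
  (∀ γ δ φ, Fml.dia (.seq γ δ) φ ∈ H.L w → Fml.dia γ (.dia δ φ) ∈ H.L w) ∧
  (∀ γ δ φ, Fml.box (.seq γ δ) φ ∈ H.L w → Fml.box γ (.box δ φ) ∈ H.L w) ∧
  -- H3 (β-formulae)
  (∀ φ ψ, Fml.or φ ψ ∈ H.L w → φ ∈ H.L w ∨ ψ ∈ H.L w) ∧
  (∀ γ δ φ, Fml.dia (.choice γ δ) φ ∈ H.L w → Fml.dia γ φ ∈ H.L w ∨ Fml.dia δ φ ∈ H.L w) ∧
  (∀ γ φ, Fml.dia (.star γ) φ ∈ H.L w →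
    φ ∈ H.L w ∨ Fml.dia γ (.dia (.star γ) φ) ∈ H.L w) ∧
  (∀ ψ φ, Fml.box (.test ψ) φ ∈ H.L w → φ ∈ H.L w ∨ nnfNeg ψ ∈ H.L w) ∧
  -- H4 and H5
  (∀ l : Lit, ∀ φ, Fml.dia l.toProg φ ∈ H.L w → ∃ v, H.Rl l w v ∧ φ ∈ H.L v) ∧
  (∀ l : Lit, ∀ φ, Fml.box l.toProg φ ∈ H.L w → ∀ v, H.Rl l w v → φ ∈ H.L v) ∧
  -- H6
  (∀ γ φ, Fml.dia (.star γ) φ ∈ H.L w →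
    ∃ σ, FulfillChain H w (.dia (.star γ) φ) φ σ)

/-!
The truth sets of a model form a Hintikka structure; the fulfilling chain demanded by H6 for
`⟨γ*⟩φ` is obtained by unfolding `γ*` along a `γ*`-path that witnesses it.

Conversely, in the model induced by a Hintikka structure every NNF formula of a label is true,
by induction on size. Boxes propagate through the labels along program paths by H2, H3 and H5,
where `[θ?]` uses that `∼θ` is no larger than `θ`. A diamond `⟨γ*⟩φ` is made true by walking
its fulfilling chain backwards: the tests met on the way are tests of `γ`, hence smaller than
`⟨γ*⟩φ`, and so are true wherever they are in the label.
-/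

open Relation

theorem psize_pos (γ : Prog) : 0 < psize γ := by
  cases γ <;> simp only [psize] <;> omega

theorem fsize_le_fsize_neg (φ : Fml) : fsize φ ≤ fsize (.neg φ) := by
  cases φ <;> simp [fsize]

mutual
theorem fsize_nnf_le : ∀ φ, fsize (nnf φ) ≤ fsize φ
  | .var _ => le_rfl
  | .neg φ => (fsize_nnfNeg_le φ).trans (fsize_le_fsize_neg φ)
  | .and φ ψ | .or φ ψ => by
      have := fsize_nnf_le φ; have := fsize_nnf_le ψ; simp only [nnf, fsize]; omega
  | .dia γ φ | .box γ φ => by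
      have := fsize_nnf_le φ; simp only [nnf, fsize]; omega
theorem fsize_nnfNeg_le : ∀ φ, fsize (nnfNeg φ) ≤ fsize φ
  | .var _ => le_rfl
  | .neg φ => (fsize_nnf_le φ).trans (fsize_le_fsize_neg φ)
  | .and φ ψ | .or φ ψ => by
      have := fsize_nnfNeg_le φ; have := fsize_nnfNeg_le ψ; simp only [nnfNeg, fsize]; omega
  | .dia γ φ | .box γ φ => by
      have := fsize_nnfNeg_le φ; simp only [nnfNeg, fsize]; omega
end

mutual
theorem isNNF_nnf : ∀ φ, IsNNF φ → IsNNF (nnf φ)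
  | .var _, _ | .neg (.var _), _ => trivial
  | .and φ ψ, h | .or φ ψ, h => ⟨isNNF_nnf φ h.1, isNNF_nnf ψ h.2⟩
  | .dia _ φ, h | .box _ φ, h => ⟨h.1, isNNF_nnf φ h.2⟩
theorem isNNF_nnfNeg : ∀ φ, IsNNF φ → IsNNF (nnfNeg φ)
  | .var _, _ | .neg (.var _), _ => trivial
  | .and φ ψ, h | .or φ ψ, h => ⟨isNNF_nnfNeg φ h.1, isNNF_nnfNeg ψ h.2⟩
  | .dia _ φ, h | .box _ φ, h => ⟨h.1, isNNF_nnfNeg φ h.2⟩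
end

mutual
theorem sat_nnf {W : Type} (M : Model W) : ∀ φ w, Sat M w (nnf φ) ↔ Sat M w φ
  | .var _, _ => Iff.rfl
  | .neg φ, w => by simp only [nnf, Sat, sat_nnfNeg M φ w]
  | .and φ ψ, w | .or φ ψ, w => by simp only [nnf, Sat, sat_nnf M φ w, sat_nnf M ψ w]
  | .dia _ φ, w => by simp only [nnf, Sat, sat_nnf M φ]
  | .box _ φ, w => by simp only [nnf, Sat, sat_nnf M φ]
theorem sat_nnfNeg {W : Type} (M : Model W) : ∀ φ w, Sat M w (nnfNeg φ) ↔ ¬ Sat M w φ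
  | .var _, _ => Iff.rfl
  | .neg φ, w => by simp only [nnfNeg, Sat, sat_nnf M φ w, not_not]
  | .and φ ψ, w => by simp only [nnfNeg, Sat, sat_nnfNeg M φ w, sat_nnfNeg M ψ w]; tauto
  | .or φ ψ, w => by simp only [nnfNeg, Sat, sat_nnfNeg M φ w, sat_nnfNeg M ψ w]; tauto
  | .dia _ φ, w => by simp only [nnfNeg, Sat, sat_nnfNeg M φ, not_exists, not_and]
  | .box _ φ, w => by simp only [nnfNeg, Sat, sat_nnfNeg M φ, not_forall, exists_prop]
end

section

variable {W : Type}

def Str.toModel (H : Str W) : Model W := ⟨H.R, fun p w => .var p ∈ H.L w⟩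

def Model.toStr (M : Model W) : Str W := ⟨M.R, fun w => {ψ | Sat M w ψ}⟩

theorem Str.prel_toModel_toProg (H : Str W) (l : Lit) :
    PRel H.toModel l.toProg = H.Rl l := by
  cases l <;> rfl

theorem Model.toStr_rl (M : Model W) (l : Lit) : M.toStr.Rl l = PRel M l.toProg := by
  cases l <;> rfl

/-- Fulfilling chains are the paths of this relation that start in the label. -/
def Str.Step (H : Str W) (p q : W × Fml) : Prop := SChainStep H p q ∧ q.2 ∈ H.L q.1

theorem Str.mem_of_reflTransGen_step {H : Str W} {p q : W × Fml} (h : ReflTransGen H.Step p q)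
    (hp : p.2 ∈ H.L p.1) : q.2 ∈ H.L q.1 := by
  rcases h.cases_tail with rfl | ⟨_, _, hstep⟩
  exacts [hp, hstep.2]

theorem exists_fulfillChain_iff {H : Str W} {w : W} {φ ψ : Fml} :
    (∃ σ, FulfillChain H w φ ψ σ) ↔ φ ∈ H.L w ∧ ∃ v, ReflTransGen H.Step (w, φ) (v, ψ) := by
  constructor
  · rintro ⟨σ, hne, hhead, hlast, hmem, hsteps⟩
    have hchain : σ.IsChain H.Step := List.isChain_iff_getElem.mpr fun i hi =>
      ⟨hsteps i hi, hmem _ (List.getElem_mem hi)⟩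
    have hφ := hmem _ (List.head_mem hne)
    rw [hhead] at hφ
    refine ⟨hφ, (σ.getLast hne).1, ?_⟩
    rw [← hhead, ← hlast]
    exact List.relationReflTransGen_of_exists_isChain σ hchain hne
  · rintro ⟨hφ, v, hpath⟩
    obtain ⟨σ, hne, hchain, hhead, hlast⟩ :=
      List.exists_isChain_ne_nil_of_relationReflTransGen hpath
    refine ⟨σ, hne, hhead, by rw [hlast], ?_, fun i hi =>
      (List.isChain_iff_getElem.mp hchain i hi).1⟩
    exact hchain.induction (fun p => p.2 ∈ H.L p.1) σ (fun _ _ hstep _ => hstep.2)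
      (fun _ => hhead ▸ hφ)

theorem SChainStep.lit_or_red {H : Str W} {p q : W × Fml} (h : SChainStep H p q) :
    (∃ l χ, p.2 = .dia l.toProg χ ∧ q.2 = χ ∧ H.Rl l p.1 q.1) ∨
      (Red p.2 q.2 ∧ q.1 = p.1) := by
  obtain ⟨u, χ⟩ := p
  obtain ⟨u', χ'⟩ := q
  rcases χ with _ | _ | _ | _ | ⟨_ | _ | _ | _ | _ | _, _⟩ | _
  all_goals first
    | exact Or.inr h
    | exact Or.inl ⟨.atom _, _, rfl, h⟩
    | exact Or.inl ⟨.conv _, _, rfl, h⟩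

end

def TestsSatisfy (P : Fml → Prop) : Prog → Prop
  | .atom _ | .conv _ => True
  | .seq γ δ | .choice γ δ => TestsSatisfy P γ ∧ TestsSatisfy P δ
  | .star γ => TestsSatisfy P γ
  | .test θ => P θ

/-- `P` holds of the tests of the programs in the diamond prefix `⟨γ₁⟩…⟨γ_k⟩` of `φ`. -/
def PrefixTestsSatisfy (P : Fml → Prop) : Fml → Prop
  | .dia γ φ => TestsSatisfy P γ ∧ PrefixTestsSatisfy P φ
  | _ => True

theorem testsSatisfy_of_isNNFP {B : ℕ} :
    ∀ γ, IsNNFP γ → psize γ ≤ B → TestsSatisfy (fun θ => IsNNF θ ∧ fsize θ < B) γ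
  | .atom _, _, _ | .conv _, _, _ => trivial
  | .seq γ δ, h, hB | .choice γ δ, h, hB => by
      simp only [psize] at hB
      exact ⟨testsSatisfy_of_isNNFP γ h.1 (by omega), testsSatisfy_of_isNNFP δ h.2 (by omega)⟩
  | .star γ, h, hB => testsSatisfy_of_isNNFP γ h (by simp only [psize] at hB; omega)
  | .test _, h, hB => ⟨h, by simp only [psize] at hB; omega⟩

theorem prefixTestsSatisfy_of_isNNF {B : ℕ} :
    ∀ φ, IsNNF φ → fsize φ ≤ B → PrefixTestsSatisfy (fun θ => IsNNF θ ∧ fsize θ < B) φ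
  | .dia γ φ, h, hB => by
      simp only [fsize] at hB
      exact ⟨testsSatisfy_of_isNNFP γ h.1 (by omega),
        prefixTestsSatisfy_of_isNNF φ h.2 (by omega)⟩
  | .var _, _, _ | .neg _, _, _ | .and _ _, _, _ | .or _ _, _, _ | .box _ _, _, _ => trivial

theorem Red.prefixTestsSatisfy {P : Fml → Prop} {χ χ' : Fml} (h : Red χ χ')
    (hχ : PrefixTestsSatisfy P χ) : PrefixTestsSatisfy P χ' := by
  cases h <;> simp_all only [PrefixTestsSatisfy, TestsSatisfy] <;> trivial

theorem SChainStep.prefixTestsSatisfy {W : Type} {H : Str W} {P : Fml → Prop}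
    {p q : W × Fml} (h : SChainStep H p q) (hp : PrefixTestsSatisfy P p.2) :
    PrefixTestsSatisfy P q.2 := by
  rcases h.lit_or_red with ⟨l, χ, hp2, hq2, -⟩ | ⟨hred, -⟩
  · rw [hp2] at hp
    exact hq2 ▸ hp.2
  · exact hred.prefixTestsSatisfy hp

theorem Red.sat_of_sat {W : Type} (M : Model W) {χ χ' : Fml} {u : W} (h : Red χ χ')
    (htest : ∀ θ χ₀, χ = .dia (.test θ) χ₀ → Sat M u θ) (h' : Sat M u χ') : Sat M u χ := by
  cases h with
  | seq =>
    obtain ⟨x, hx, y, hy, hs⟩ := h'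
    exact ⟨y, ⟨x, hx, hy⟩, hs⟩
  | choiceL =>
    obtain ⟨x, hx, hs⟩ := h'
    exact ⟨x, Or.inl hx, hs⟩
  | choiceR =>
    obtain ⟨x, hx, hs⟩ := h'
    exact ⟨x, Or.inr hx, hs⟩
  | star1 => exact ⟨u, .refl, h'⟩
  | star2 =>
    obtain ⟨x, hx, y, hy, hs⟩ := h'
    exact ⟨y, .head hx hy, hs⟩
  | test θ => exact ⟨u, ⟨rfl, htest θ _ rfl⟩, h'⟩

section TruthLemma

variable {W : Type} {H : Str W}

def TruthBelow (H : Str W) (B : ℕ) : Prop :=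
  ∀ χ w, IsNNF χ → fsize χ < B → χ ∈ H.L w → Sat H.toModel w χ

theorem Hintikka.mem_of_box_of_prel (hH : Hintikka H) {B : ℕ} (hB : TruthBelow H B) :
    ∀ γ, IsNNFP γ → psize γ ≤ B → ∀ {χ u v}, Fml.box γ χ ∈ H.L u →
      PRel H.toModel γ u v → χ ∈ H.L v
  | .atom a, _, _, _, u, _, hmem, huv => by
      obtain ⟨-, -, -, -, -, -, -, -, -, -, -, -, hboxLit, -⟩ := hH u
      exact hboxLit (.atom a) _ hmem _ huv
  | .conv a, _, _, _, u, _, hmem, huv => by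
      obtain ⟨-, -, -, -, -, -, -, -, -, -, -, -, hboxLit, -⟩ := hH u
      exact hboxLit (.conv a) _ hmem _ huv
  | .seq γ δ, hγδ, hsize, _, u, _, hmem, ⟨x, hux, hxv⟩ => by
      simp only [psize] at hsize
      obtain ⟨-, -, -, -, -, -, hboxSeq, -, -, -, -, -, -, -⟩ := hH u
      have hx := hH.mem_of_box_of_prel hB γ hγδ.1 (by omega) (hboxSeq γ δ _ hmem) hux
      exact hH.mem_of_box_of_prel hB δ hγδ.2 (by omega) hx hxv
  | .choice γ δ, hγδ, hsize, _, u, _, hmem, huv => by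
      simp only [psize] at hsize
      obtain ⟨-, -, hboxChoice, -, -, -, -, -, -, -, -, -, -, -⟩ := hH u
      obtain ⟨hγ, hδ⟩ := hboxChoice γ δ _ hmem
      rcases huv with huv | huv
      exacts [hH.mem_of_box_of_prel hB γ hγδ.1 (by omega) hγ huv,
        hH.mem_of_box_of_prel hB δ hγδ.2 (by omega) hδ huv]
  | .star γ, hγ, hsize, χ, _, v, hmem, huv => by
      simp only [psize] at hsize
      induction huv using ReflTransGen.head_induction_on with
      | refl =>
        obtain ⟨-, -, -, hboxStar, -, -, -, -, -, -, -, -, -, -⟩ := hH v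
        exact (hboxStar γ χ hmem).1
      | @head u x hux _ ih =>
        obtain ⟨-, -, -, hboxStar, -, -, -, -, -, -, -, -, -, -⟩ := hH u
        exact ih (hH.mem_of_box_of_prel hB γ hγ (by omega) (hboxStar γ χ hmem).2 hux)
  | .test θ, hθ, hsize, _, u, _, hmem, ⟨rfl, hsat⟩ => by
      obtain ⟨-, -, -, -, -, -, -, -, -, -, hboxTest, -, -, -⟩ := hH u
      refine (hboxTest θ _ hmem).resolve_right fun hneg => ?_
      have hsize' := fsize_nnfNeg_le θ
      simp only [psize] at hsize
      exact (sat_nnfNeg _ θ u).mp (hB _ u (isNNF_nnfNeg θ hθ) (by omega) hneg) hsat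

theorem Hintikka.sat_of_reflTransGen_step (hH : Hintikka H) {P : Fml → Prop}
    (hP : ∀ θ u, P θ → θ ∈ H.L u → Sat H.toModel u θ) {p q : W × Fml}
    (hpq : ReflTransGen H.Step p q) (hp : p.2 ∈ H.L p.1) (hPp : PrefixTestsSatisfy P p.2)
    (hq : Sat H.toModel q.1 q.2) : Sat H.toModel p.1 p.2 := by
  induction hpq using ReflTransGen.head_induction_on with
  | refl => exact hq
  | @head p p' hstep _ ih =>
    obtain ⟨hstep, hp'⟩ := hstep
    have hsat' := ih hp' (hstep.prefixTestsSatisfy hPp)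
    rcases hstep.lit_or_red with ⟨l, χ, hp2, hp'2, hR⟩ | ⟨hred, hu⟩
    · rw [hp2]
      exact ⟨p'.1, H.prel_toModel_toProg l ▸ hR, hp'2 ▸ hsat'⟩
    · refine hred.sat_of_sat _ (fun θ χ₀ hχ => ?_) (hu ▸ hsat')
      rw [hχ] at hp hPp
      obtain ⟨-, -, -, -, hdiaTest, -, -, -, -, -, -, -, -, -⟩ := hH p.1
      exact hP θ p.1 hPp.1 (hdiaTest θ χ₀ hp).2

theorem Hintikka.sat_dia_lit (hH : Hintikka H) {B : ℕ} (hB : TruthBelow H B) (l : Lit)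
    {ψ : Fml} {w : W} (hψ : IsNNF ψ) (hsize : fsize ψ < B) (hmem : Fml.dia l.toProg ψ ∈ H.L w) :
    Sat H.toModel w (.dia l.toProg ψ) := by
  obtain ⟨-, -, -, -, -, -, -, -, -, -, -, hdiaLit, -, -⟩ := hH w
  obtain ⟨v, hR, hv⟩ := hdiaLit l ψ hmem
  exact ⟨v, H.prel_toModel_toProg l ▸ hR, hB ψ v hψ hsize hv⟩

theorem Hintikka.sat_dia (hH : Hintikka H) {B : ℕ} (hB : TruthBelow H B) :
    ∀ γ ψ w, IsNNFP γ → IsNNF ψ → fsize (.dia γ ψ) ≤ B → Fml.dia γ ψ ∈ H.L w →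
      Sat H.toModel w (.dia γ ψ)
  | .atom a, _, _, _, hψ, hsize, hmem =>
      hH.sat_dia_lit hB (.atom a) hψ (by simp only [fsize, psize] at hsize; omega) hmem
  | .conv a, _, _, _, hψ, hsize, hmem =>
      hH.sat_dia_lit hB (.conv a) hψ (by simp only [fsize, psize] at hsize; omega) hmem
  | .seq γ δ, ψ, w, hγδ, hψ, hsize, hmem => by
      simp only [fsize, psize] at hsize
      obtain ⟨-, -, -, -, -, hdiaSeq, -, -, -, -, -, -, -, -⟩ := hH w
      obtain ⟨x, hx, y, hy, hs⟩ := hH.sat_dia hB γ (.dia δ ψ) w hγδ.1 ⟨hγδ.2, hψ⟩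
        (by simp only [fsize]; omega) (hdiaSeq γ δ ψ hmem)
      exact ⟨y, ⟨x, hx, hy⟩, hs⟩
  | .choice γ δ, ψ, w, hγδ, hψ, hsize, hmem => by
      simp only [fsize, psize] at hsize
      obtain ⟨-, -, -, -, -, -, -, -, hdiaChoice, -, -, -, -, -⟩ := hH w
      rcases hdiaChoice γ δ ψ hmem with hγ | hδ
      · obtain ⟨x, hx, hs⟩ := hH.sat_dia hB γ ψ w hγδ.1 hψ (by simp only [fsize]; omega) hγ
        exact ⟨x, Or.inl hx, hs⟩
      · obtain ⟨x, hx, hs⟩ := hH.sat_dia hB δ ψ w hγδ.2 hψ (by simp only [fsize]; omega) hδ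
        exact ⟨x, Or.inr hx, hs⟩
  | .star γ, ψ, w, hγ, hψ, hsize, hmem => by
      obtain ⟨-, -, -, -, -, -, -, -, -, -, -, -, -, hfulfil⟩ := hH w
      obtain ⟨-, v, hpath⟩ := exists_fulfillChain_iff.mp (hfulfil γ ψ hmem)
      have hψv : Sat H.toModel v ψ := hB ψ v hψ
        (by simp only [fsize, psize] at hsize; omega) (Str.mem_of_reflTransGen_step hpath hmem)
      exact hH.sat_of_reflTransGen_step (fun θ u hθ => hB θ u hθ.1 hθ.2) hpath hmem
        (prefixTestsSatisfy_of_isNNF _ ⟨hγ, hψ⟩ hsize) hψv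
  | .test θ, ψ, w, hθ, hψ, hsize, hmem => by
      simp only [fsize, psize] at hsize
      obtain ⟨-, -, -, -, hdiaTest, -, -, -, -, -, -, -, -, -⟩ := hH w
      obtain ⟨hψw, hθw⟩ := hdiaTest θ ψ hmem
      exact ⟨w, ⟨rfl, hB θ w hθ (by omega) hθw⟩, hB ψ w hψ (by omega) hψw⟩

theorem Hintikka.truthBelow (hH : Hintikka H) : ∀ n, TruthBelow H n
  | 0 => fun _ _ _ hsize _ => absurd hsize (Nat.not_lt_zero _)
  | n + 1 => fun χ w hχ hsize hmem => by
    have ih := hH.truthBelow n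
    match χ, hχ with
    | .var _, _ => exact hmem
    | .neg (.var p), _ => exact (hH w).1 p hmem
    | .and φ ψ, ⟨hφ, hψ⟩ =>
      simp only [fsize] at hsize
      obtain ⟨-, hand, -, -, -, -, -, -, -, -, -, -, -, -⟩ := hH w
      obtain ⟨hφw, hψw⟩ := hand φ ψ hmem
      exact ⟨ih φ w hφ (by omega) hφw, ih ψ w hψ (by omega) hψw⟩
    | .or φ ψ, ⟨hφ, hψ⟩ =>
      simp only [fsize] at hsize
      obtain ⟨-, -, -, -, -, -, -, hor, -, -, -, -, -, -⟩ := hH w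
      rcases hor φ ψ hmem with hφw | hψw
      exacts [Or.inl (ih φ w hφ (by omega) hφw), Or.inr (ih ψ w hψ (by omega) hψw)]
    | .dia γ ψ, ⟨hγ, hψ⟩ => exact hH.sat_dia ih γ ψ w hγ hψ (by omega) hmem
    | .box γ ψ, ⟨hγ, hψ⟩ =>
      have := psize_pos γ
      simp only [fsize] at hsize
      exact fun v huv => ih ψ v hψ (by omega)
        (hH.mem_of_box_of_prel ih γ hγ (by omega) hmem huv)

end TruthLemma

section TruthSets

variable {W : Type} (M : Model W)

theorem Model.reflTransGen_step_of_prel :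
    ∀ γ χ w v, PRel M γ w v → Sat M v χ → ReflTransGen M.toStr.Step (w, .dia γ χ) (v, χ)
  | .atom _, _, _, _, hwv, hv | .conv _, _, _, _, hwv, hv => .single ⟨⟨rfl, hwv⟩, hv⟩
  | .seq γ δ, χ, w, v, ⟨x, hwx, hxv⟩, hv =>
      .head (b := (w, Fml.dia γ (.dia δ χ))) ⟨⟨Red.seq γ δ χ, rfl⟩, x, hwx, v, hxv, hv⟩ <|
        (reflTransGen_step_of_prel γ (.dia δ χ) w x hwx ⟨v, hxv, hv⟩).trans
          (reflTransGen_step_of_prel δ χ x v hxv hv)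
  | .choice γ δ, χ, w, v, .inl hwv, hv =>
      .head (b := (w, Fml.dia γ χ)) ⟨⟨Red.choiceL γ δ χ, rfl⟩, v, hwv, hv⟩
        (reflTransGen_step_of_prel γ χ w v hwv hv)
  | .choice γ δ, χ, w, v, .inr hwv, hv =>
      .head (b := (w, Fml.dia δ χ)) ⟨⟨Red.choiceR γ δ χ, rfl⟩, v, hwv, hv⟩
        (reflTransGen_step_of_prel δ χ w v hwv hv)
  | .test θ, χ, w, _, ⟨rfl, _⟩, hv => .single ⟨⟨Red.test θ χ, rfl⟩, hv⟩
  | .star γ, χ, w, v, hwv, hv => by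
      induction hwv using ReflTransGen.head_induction_on with
      | refl => exact .single ⟨⟨Red.star1 γ χ, rfl⟩, hv⟩
      | @head w x hwx hxv ih =>
        exact .head (b := (w, Fml.dia γ (.dia (.star γ) χ)))
          ⟨⟨Red.star2 γ χ, rfl⟩, x, hwx, v, hxv, hv⟩ <|
            (reflTransGen_step_of_prel γ (.dia (.star γ) χ) w x hwx ⟨v, hxv, hv⟩).trans ih

theorem Model.hintikka_toStr : Hintikka M.toStr := by
  intro w
  refine ⟨?_, ?_, ?_, ?_, ?_, ?_, ?_, ?_, ?_, ?_, ?_, ?_, ?_, ?_⟩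
  · exact fun p hneg hp => hneg hp
  · exact fun φ ψ h => h
  · exact fun γ δ φ h => ⟨fun v hv => h v (.inl hv), fun v hv => h v (.inr hv)⟩
  · exact fun γ φ h => ⟨h w .refl, fun x hx v hv => h v (.head hx hv)⟩
  · rintro ψ φ ⟨_, ⟨rfl, hψ⟩, hφ⟩
    exact ⟨hφ, hψ⟩
  · rintro γ δ φ ⟨v, ⟨x, hx, hv⟩, hφ⟩
    exact ⟨x, hx, v, hv, hφ⟩
  · exact fun γ δ φ h x hx y hy => h y ⟨x, hx, hy⟩
  · exact fun φ ψ h => h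
  · rintro γ δ φ ⟨v, hv | hv, hφ⟩
    exacts [.inl ⟨v, hv, hφ⟩, .inr ⟨v, hv, hφ⟩]
  · rintro γ φ ⟨v, hv, hφ⟩
    rcases hv.cases_head with rfl | ⟨x, hx, hxv⟩
    exacts [.inl hφ, .inr ⟨x, hx, v, hxv, hφ⟩]
  · intro ψ φ h
    by_cases hψ : Sat M w ψ
    exacts [.inl (h w ⟨rfl, hψ⟩), .inr ((sat_nnfNeg M ψ w).mpr hψ)]
  · rintro l φ ⟨v, hv, hφ⟩
    exact ⟨v, M.toStr_rl l ▸ hv, hφ⟩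
  · intro l φ h v hv
    exact h v (M.toStr_rl l ▸ hv)
  · rintro γ φ ⟨v, hwv, hv⟩
    exact exists_fulfillChain_iff.mpr ⟨⟨v, hwv, hv⟩, v, M.reflTransGen_step_of_prel _ φ w v hwv hv⟩

end TruthSets

/-- an NNF formula is satisfiable iff there is a Hintikka structure for it. -/
theorem satisfiable_iff_hintikka (φ : Fml) (hφ : IsNNF φ) :
    (∃ (W : Type) (M : Model W) (w : W), Sat M w φ) ↔
    (∃ (W : Type) (H : Str W) (v : W), Hintikka H ∧ φ ∈ H.L v) := by
  constructor
  · rintro ⟨W, M, w, hw⟩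
    exact ⟨W, M.toStr, w, M.hintikka_toStr, hw⟩
  · rintro ⟨W, H, v, hH, hv⟩
    exact ⟨W, H.toModel, v, hH.truthBelow _ φ v hφ (Nat.lt_succ_self _) hv⟩
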